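/- Let n ≥ 2, q ∈ ℂ with 0 < |q| < 1 and t ∈ ℂ*, and for λ ∈ ℤ^n define d_λ(u) = ∏_{j=1}^n (1 − u t^{n−j} q^{λ_j}) ∈ ℂ[u]. Then the polynomials d_λ(u) separate the set P_+ of dominant vectors (vectors λ ∈ ℤ^n with λ_1 ≥ ⋯ ≥ λ_n) if and only if t^k ∉ q^{ℤ_{<0}} for k = 1,…,n−1. -/

import Mathlib

open scoped BigOperators Classical
open MeasureTheory

noncomputable section

/-- The infinite `p`-Pochhammer symbol `(z;p)_∞ = ∏_{i≥0} (1 - p^i z)`. -/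
def qPochInf (z p : ℂ) : ℂ := ∏' i : ℕ, (1 - p ^ i * z)

/-- The finite `q`-Pochhammer symbol `(a;q)_k`. -/
def qPochFin (a q : ℂ) (k : ℕ) : ℂ := ∏ i ∈ Finset.range k, (1 - q ^ i * a)

/-- The theta function `θ(z;p) = (z;p)_∞ (p/z;p)_∞`. -/
def thetaF (z p : ℂ) : ℂ := qPochInf z p * qPochInf (p / z) p

/-- The double Pochhammer symbol `(z;p,q)_∞`. -/
def qPochInf2 (z p q : ℂ) : ℂ := ∏' ij : ℕ × ℕ, (1 - p ^ ij.1 * q ^ ij.2 * z)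

/-- The Ruijsenaars elliptic gamma function `Γ(z;p,q)`. -/
def ellGamma (z p q : ℂ) : ℂ := qPochInf2 (p * q / z) p q / qPochInf2 z p q

/-- `q`-shift of the variables in positions `I`. -/
def qShift {n : ℕ} (q : ℂ) (I : Finset (Fin n)) (x : Fin n → ℂ) : Fin n → ℂ :=
  fun i => if i ∈ I then q * x i else x i

/-- The elliptic Ruijsenaars `q`-difference operator of order `r`, applied to a function. -/
def ellD {n : ℕ} (p q t : ℂ) (r : ℕ) (f : (Fin n → ℂ) → ℂ) (x : Fin n → ℂ) : ℂ :=
  t ^ r.choose 2 * ∑ I ∈ Finset.powersetCard r Finset.univ,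
    (∏ i ∈ I, ∏ j ∈ Iᶜ, thetaF (t * x i / x j) p / thetaF (x i / x j) p) * f (qShift q I x)

/-- Generating series `D_x(p;u) = Σ_{r=0}^n (-u)^r D^{(r)}_x(p)`. -/
def ellDgen {n : ℕ} (p q t u : ℂ) (f : (Fin n → ℂ) → ℂ) (x : Fin n → ℂ) : ℂ :=
  ∑ r ∈ Finset.range (n + 1), (-u) ^ r * ellD p q t r f x

/-- The coefficient `B_I(x;p)` of the modified elliptic Ruijsenaars operators. -/
def Bcoef {n : ℕ} (p t : ℂ) (I : Finset (Fin n)) (x : Fin n → ℂ) : ℂ :=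
  (∏ i ∈ I, ∏ j ∈ Iᶜ, if i < j then thetaF (x j / (t * x i)) p / thetaF (x j / x i) p else 1) *
    (∏ j ∈ I, ∏ i ∈ Iᶜ, if i < j then thetaF (t * x j / x i) p / thetaF (x j / x i) p else 1)

/-- The modified elliptic Ruijsenaars operator `E^{(r)}_{x,s}(p)`, applied to a function. -/
def modE {n : ℕ} (p q t : ℂ) (s : Fin n → ℂ) (r : ℕ) (f : (Fin n → ℂ) → ℂ)
    (x : Fin n → ℂ) : ℂ :=
  ∑ I ∈ Finset.powersetCard r Finset.univ,
    (∏ i ∈ I, s i) * Bcoef p t I x * f (qShift q I x)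

/-- The elementary symmetric polynomial `e_r(s)`. -/
def esymF {n : ℕ} (s : Fin n → ℂ) (r : ℕ) : ℂ :=
  ∑ I ∈ Finset.powersetCard r Finset.univ, ∏ i ∈ I, s i

/-- Laurent polynomials in `n` variables, as finitely supported coefficient functions. -/
abbrev LPoly (n : ℕ) := (Fin n → ℤ) →₀ ℂ

/-- Evaluation of a Laurent polynomial at a point of `(ℂ*)^n`. -/
def evalL {n : ℕ} (f : LPoly n) (x : Fin n → ℂ) : ℂ :=
  ∑ μ ∈ f.support, f μ * ∏ i, x i ^ μ i

/-- Symmetric Laurent polynomials. -/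
def SymmL {n : ℕ} (f : LPoly n) : Prop :=
  ∀ σ : Equiv.Perm (Fin n), ∀ μ : Fin n → ℤ, f (μ ∘ σ) = f μ

/-- The permutation action on Laurent polynomials. -/
def permL {n : ℕ} (σ : Equiv.Perm (Fin n)) (f : LPoly n) : LPoly n :=
  Finsupp.equivMapDomain (Equiv.arrowCongr σ (Equiv.refl ℤ)) f

/-- Dominant vectors `λ_1 ≥ λ_2 ≥ ⋯ ≥ λ_n`. -/
def DomVec {n : ℕ} (μ : Fin n → ℤ) : Prop := ∀ i j : Fin n, i ≤ j → μ j ≤ μ i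

/-- The dominance order on `ℤ^n`. -/
def domLE {n : ℕ} (μ ν : Fin n → ℤ) : Prop :=
  (∑ i, μ i = ∑ i, ν i) ∧
    ∀ k : Fin n, ∑ i ∈ Finset.univ.filter (fun i => i ≤ k), μ i ≤
      ∑ i ∈ Finset.univ.filter (fun i => i ≤ k), ν i

/-- Membership in `ℂ[x^{±1}]^{S_n}_{≤ λ}`: the span of the monomial symmetric
functions `m_μ` over dominant `μ ≤ λ`. -/
def InBelow {n : ℕ} (f : LPoly n) (lam : Fin n → ℤ) : Prop :=
  SymmL f ∧ ∀ ν ∈ f.support, ∃ μ : Fin n → ℤ,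
    DomVec μ ∧ (∃ σ : Equiv.Perm (Fin n), ν = μ ∘ σ) ∧ domLE μ lam

/-- The spectral vector `t^ρ q^λ = (t^{n-1} q^{λ_1}, …, q^{λ_n})`. -/
def specVec {n : ℕ} (q t : ℂ) (lam : Fin n → ℤ) : Fin n → ℂ :=
  fun i => t ^ (n - 1 - (i : ℕ)) * q ^ lam i

/-- Characterization of the Macdonald Laurent polynomial attached to a dominant vector. -/
def IsMacdonald {n : ℕ} (q t : ℂ) (lam : Fin n → ℤ) (P : LPoly n) : Prop :=
  InBelow P lam ∧ P lam = 1 ∧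
    ∀ r ∈ Finset.Icc 1 n, ∀ x : Fin n → ℂ, (∀ i, x i ≠ 0) →
      (∀ i j : Fin n, i ≠ j → x i ≠ x j) →
      ellD 0 q t r (evalL P) x = esymF (specVec q t lam) r * evalL P x

/-- Domain of validity of the `p`-expansion of the elliptic Ruijsenaars operators:
`|p|^{1/(n-1)} < |x_{i+1}/x_i| < 1` (here in `n+1` variables). -/
def ExpDomain {n : ℕ} (p : ℂ) (x : Fin (n + 1) → ℂ) : Prop :=
  (∀ i, x i ≠ 0) ∧ ∀ i : Fin n,
    ‖p‖ < ‖x i.succ / x i.castSucc‖ ^ n ∧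
      ‖x i.succ / x i.castSucc‖ < 1

/-- The vector `φ = (1,0,…,0,-1)`. -/
def phiVec (n : ℕ) : Fin (n + 1) → ℤ :=
  fun i => (if i = 0 then 1 else 0) - (if i = Fin.last n then 1 else 0)

/-- The exponent vector of `x^{-δ} = p`, i.e. `(1,1,…,1)`. -/
def oneF (n : ℕ) : Fin (n + 1) →₀ ℕ := Finsupp.equivFunOnFinite.symm 1

/-- The pairing `⟨ε_j, ν⟩` for `ν ∈ Q^af_+` (cyclic convention). -/
def pairEpsF {n : ℕ} (ν : Fin (n + 1) → ℕ) (j : Fin (n + 1)) : ℤ :=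
  (ν (j + 1) : ℤ) - (ν j : ℤ)

/-- The quantity `d(ν) = Σ_j max(⟨ε_j,ν⟩,0)`. -/
def dIndF {n : ℕ} (ν : Fin (n + 1) → ℕ) : ℕ := ∑ j, (pairEpsF ν j).toNat

/-- The coordinates `z_0 = p x_1/x_n`, `z_k = x_{k+1}/x_k`. -/
def zOf (n : ℕ) (p : ℂ) (x : Fin (n + 1) → ℂ) : Fin (n + 1) → ℂ :=
  fun k => if k = 0 then p * x 0 / x (Fin.last n) else x k / x (k - 1)

/-- The ratio `x_j/x_i` (for `i < j`) expressed in the `z` coordinates. -/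
def ratZ {n : ℕ} (z : Fin (n + 1) → ℂ) (i j : Fin (n + 1)) : ℂ :=
  ∏ k ∈ Finset.Ioc i j, z k

/-- The coefficient `B_I` written as a function of the `z` coordinates
(with `p = z_0 z_1 ⋯ z_{n-1}`). -/
def BcoefZ {n : ℕ} (t : ℂ) (I : Finset (Fin (n + 1))) (z : Fin (n + 1) → ℂ) : ℂ :=
  (∏ i ∈ I, ∏ j ∈ Iᶜ, if i < j then
      thetaF (ratZ z i j / t) (∏ k, z k) / thetaF (ratZ z i j) (∏ k, z k) else 1) *
    (∏ j ∈ I, ∏ i ∈ Iᶜ, if i < j then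
      thetaF (t * ratZ z i j) (∏ k, z k) / thetaF (ratZ z i j) (∏ k, z k) else 1)

/-- The symbol `b_β(q^{-ν})` of the modified elliptic Ruijsenaars operator of order `r`. -/
def bEval {n : ℕ} (q : ℂ) (s : Fin (n + 1) → ℂ)
    (b : Finset (Fin (n + 1)) → ((Fin (n + 1) →₀ ℕ) → ℂ)) (r : ℕ)
    (β ν : Fin (n + 1) →₀ ℕ) : ℂ :=
  ∑ I ∈ Finset.powersetCard r Finset.univ,
    b I β * ∏ i ∈ I, s i * q ^ (-pairEpsF (⇑ν) i)

/-- The formal joint eigenvalue equations, coefficientwise in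
`ℂ[[p x_1/x_n, x_2/x_1, …, x_n/x_{n-1}]]`. -/
def FormalEigen {n : ℕ} (q : ℂ) (s : Fin (n + 1) → ℂ)
    (b : Finset (Fin (n + 1)) → ((Fin (n + 1) →₀ ℕ) → ℂ))
    (f : (Fin (n + 1) →₀ ℕ) → ℂ) (ε : ℕ → ℕ → ℂ) : Prop :=
  ∀ r ∈ Finset.Icc 1 (n + 1), ∀ μ : Fin (n + 1) →₀ ℕ,
    ∑ bv ∈ Finset.HasAntidiagonal.antidiagonal μ, bEval q s b r bv.1 bv.2 * f bv.2 =
      ∑ k ∈ Finset.range (μ 0 + 1),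
        if k • oneF n ≤ μ then ε r k * f (μ - k • oneF n) else 0

/-- Contour integral over the `n`-cycle `{|y_i| = rad i}`, against the
normalized measure `dω_n(y)`. -/
def cycleIntegral {n : ℕ} (rad : Fin n → ℝ) (g : (Fin n → ℂ) → ℂ) : ℂ :=
  ∫ θ in (Set.univ.pi fun _ : Fin n => Set.Icc (0 : ℝ) 1),
    g fun i => (rad i : ℂ) * Complex.exp (2 * Real.pi * Complex.I * (θ i : ℂ))

/-- Normalized integral over the unit torus `𝕋^n`. -/
def torusInt (n : ℕ) (g : (Fin n → ℂ) → ℂ) : ℂ := cycleIntegral (fun _ => 1) g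

/-- The symmetric weight function `w^sym(x;p)`. -/
def wsymF {n : ℕ} (p q t : ℂ) (x : Fin n → ℂ) : ℂ :=
  ∏ i, ∏ j, if i < j then
    ellGamma (t * x i / x j) p q * ellGamma (t * x j / x i) p q /
      (ellGamma (x i / x j) p q * ellGamma (x j / x i) p q) else 1

/-- The trigonometric Cauchy kernel `K(x,y)`. -/
def cauchyK {n : ℕ} (q t : ℂ) (x y : Fin n → ℂ) : ℂ :=
  ∏ i, ∏ j, qPochInf (t * x i / y j) q / qPochInf (x i / y j) q

/-- The trigonometric weight function `w(y)`. -/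
def wTrig {n : ℕ} (q t : ℂ) (y : Fin n → ℂ) : ℂ :=
  ∏ i, ∏ j, if i < j then
    (1 - y j / y i) * qPochInf (q * y j / (t * y i)) q / qPochInf (t * y j / y i) q else 1

/-- The elliptic Cauchy kernel `K(x,y;p)`. -/
def cauchyKell {n : ℕ} (p q t : ℂ) (x y : Fin n → ℂ) : ℂ :=
  ∏ i, ∏ j, ellGamma (x i / y j) p q / ellGamma (t * x i / y j) p q

/-- The elliptic weight function `w(y;p)`. -/
def wEll {n : ℕ} (p q t : ℂ) (y : Fin n → ℂ) : ℂ :=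
  ∏ i, ∏ j, if i < j then
    thetaF (y j / y i) p * ellGamma (t * y j / y i) p q /
      ellGamma (q * y j / (t * y i)) p q else 1

/-- `λ_{j+1}` with the convention `λ_{n+1} = 0`. -/
def lamNext {n : ℕ} (lam : Fin (n + 1) → ℕ) (j : Fin (n + 1)) : ℕ :=
  if h : (j : ℕ) + 1 < n + 1 then lam ⟨(j : ℕ) + 1, h⟩ else 0

/-- The constant `b_λ` in the Cauchy expansion. -/
def bLamC {n : ℕ} (q t : ℂ) (lam : Fin (n + 1) → ℕ) : ℂ :=
  ∏ i : Fin (n + 1), ∏ j : Fin (n + 1), if i ≤ j then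
    qPochFin (t ^ ((j : ℕ) - (i : ℕ) + 1) * q ^ ((lam i : ℤ) - (lam j : ℤ))) q
        (lam j - lamNext lam j) /
      qPochFin (t ^ ((j : ℕ) - (i : ℕ)) * q ^ ((lam i : ℤ) - (lam j : ℤ) + 1)) q
        (lam j - lamNext lam j)
  else 1

/-- The coefficient `𝒜_I(x;p)` of the generating series of elliptic Ruijsenaars
operators, in the form `t^{binom(|I|,2)} ∏_{i∈I,j∉I} θ(t x_i/x_j;p)/θ(x_i/x_j;p)`. -/
def AcoefD {n : ℕ} (p t : ℂ) (I : Finset (Fin n)) (x : Fin n → ℂ) : ℂ :=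
  t ^ (I.card.choose 2) *
    ∏ i ∈ I, ∏ j ∈ Iᶜ, thetaF (t * x i / x j) p / thetaF (x i / x j) p

/-- The coefficient `𝒜_I(x;p) = t^{⟨ε_I,ρ⟩} B_I(x;p)`. -/
def AcoefB {n : ℕ} (p t : ℂ) (I : Finset (Fin n)) (x : Fin n → ℂ) : ℂ :=
  (∏ i ∈ I, t ^ (n - 1 - (i : ℕ))) * Bcoef p t I x

/-- The gamma-factor `∏_{i<j} Γ(t x_j/x_i;p,q)/Γ(q x_j/(t x_i);p,q)` in `z` coordinates. -/
def Gfac {n : ℕ} (q t : ℂ) (z : Fin (n + 1) → ℂ) : ℂ :=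
  ∏ i, ∏ j, if i < j then
    ellGamma (t * ratZ z i j) (∏ k, z k) q / ellGamma (q * ratZ z i j / t) (∏ k, z k) q
  else 1

/-- The polynomial `d_λ(u) = ∏_{j=1}^n (1 - u t^{n-j} q^{λ_j})`. -/
def dPoly {n : ℕ} (q t : ℂ) (lam : Fin n → ℤ) : Polynomial ℂ :=
  ∏ j : Fin n, (1 - Polynomial.C (specVec q t lam j) * Polynomial.X)

/-- Rotation of affine exponents: `(rotF ν) j = ν (j+1)`. -/
def rotF {n : ℕ} (ν : Fin (n + 1) →₀ ℕ) : Fin (n + 1) →₀ ℕ :=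
  Finsupp.equivMapDomain (Equiv.subRight (1 : Fin (n + 1))) ν

/-- The domain `𝒰_θ : |pq/t| θ^{-n+1} < |x_j/x_i| < |t/(pq)| θ^{n-1}` (multiplicative form). -/
def UDom (n : ℕ) (q t : ℂ) (θ : ℝ) (p : ℂ) (x : Fin (n + 1) → ℂ) : Prop :=
  (∀ i, x i ≠ 0) ∧ ∀ i j : Fin (n + 1), i < j →
    ‖p * q‖ < ‖x j / x i‖ * ‖t‖ * θ ^ n ∧
      ‖x j / x i‖ * ‖p * q‖ < ‖t‖ * θ ^ n


/-!
The roots of `d_λ` are the inverses of the spectral values `t^{n-j} q^{λ_j}`, so `d_λ = d_μ`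
exactly when the spectral values of `λ` and `μ` agree as multisets.

If `t^k = q^l` with `0 < k < n` and `l < 0`, the spectral values of `λ = (0^{k+1}, l^{n-k-1})`
in positions `1` and `k+1` are those of the dominant vector `λ - l ε_1 + l ε_{k+1}` in
positions `k+1` and `1`.

Conversely, if `t^k = q^m` with `m ≥ 0` for some `0 < k < n`, the `k`-th powers of the spectral
values of `λ` are `q^{m(n-j) + kλ_j}`; since `q` is not a root of unity the multiset of exponents
is determined, and for dominant `λ` these exponents are non-increasing in `j`, hence determined
one by one. If instead no `t^k` with `0 < k < n` lies in `q^ℤ`, a spectral value determines both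
its position `j` and `λ_j`.
-/

open Polynomial in
theorem roots_prod_one_sub_C_mul_X {K ι : Type*} [Field K] [Fintype ι] {c : ι → K}
    (hc : ∀ j, c j ≠ 0) :
    (∏ j, (1 - C (c j) * X)).roots = Finset.univ.val.map fun j => (c j)⁻¹ := by
  have hroot : ∀ j, (1 - C (c j) * X).roots = {(c j)⁻¹} := fun j => by
    rw [← neg_sub, roots_neg, ← C_1, roots_C_mul_X_sub_C _ (hc j), mul_one]
  have hne : ∀ j, (1 : K[X]) - C (c j) * X ≠ 0 := fun j h => by simpa [h] using hroot j
  rw [roots_prod _ _ (Finset.prod_ne_zero_iff.mpr fun j _ => hne j)]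
  simp only [hroot, Multiset.bind_singleton]

open Polynomial in
theorem map_univ_eq_of_prod_one_sub_C_mul_X_eq {K ι : Type*} [Field K] [Fintype ι]
    {c c' : ι → K} (hc : ∀ j, c j ≠ 0) (hc' : ∀ j, c' j ≠ 0)
    (h : ∏ j, (1 - C (c j) * X) = ∏ j, (1 - C (c' j) * X)) :
    Finset.univ.val.map c = Finset.univ.val.map c' := by
  have hinv := congrArg (Multiset.map Inv.inv) (congrArg roots h)
  simpa [roots_prod_one_sub_C_mul_X, hc, hc', Multiset.map_map, Function.comp_def] using hinv

theorem zpow_injective_of_norm_ne_one {𝕜 : Type*} [NormedDivisionRing 𝕜] {q : 𝕜}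
    (hq0 : q ≠ 0) (hq1 : ‖q‖ ≠ 1) : Function.Injective fun a : ℤ => q ^ a := fun a b h =>
  zpow_right_injective₀ (norm_pos_iff.mpr hq0) hq1 <| by
    simpa only [norm_zpow] using congrArg norm h

theorem Antitone.eq_of_map_univ_eq {α : Type*} [PartialOrder α] {n : ℕ} {f g : Fin n → α}
    (hf : Antitone f) (hg : Antitone g)
    (h : Finset.univ.val.map f = Finset.univ.val.map g) : f = g := by
  rw [Fin.univ_val_map, Fin.univ_val_map, Multiset.coe_eq_coe] at h
  exact List.ofFn_injective <| h.eq_of_pairwise' hf.sortedGE_ofFn.pairwise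
    hg.sortedGE_ofFn.pairwise

theorem eq_of_map_univ_graph_eq {ι α : Type*} [Fintype ι] {f g : ι → α}
    (h : Finset.univ.val.map (fun i => (i, f i)) = Finset.univ.val.map fun i => (i, g i)) :
    f = g := by
  funext i
  have hi : (i, f i) ∈ Finset.univ.val.map fun i => (i, g i) :=
    h ▸ Multiset.mem_map_of_mem _ (Finset.mem_univ i)
  obtain ⟨j, -, hj⟩ := Multiset.mem_map.mp hi
  obtain ⟨rfl, hfg⟩ := Prod.mk.inj hj
  exact hfg.symm

theorem pow_sub_mul_eq_pow_sub_mul_iff {G₀ : Type*} [CommGroupWithZero G₀] {t x y : G₀}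
    (ht : t ≠ 0) {N i j : ℕ} (hij : i ≤ j) (hj : j ≤ N) :
    t ^ (N - i) * x = t ^ (N - j) * y ↔ t ^ (j - i) * x = y := by
  rw [show N - i = (N - j) + (j - i) by omega, pow_add, mul_assoc]
  exact mul_right_inj' (pow_ne_zero _ ht)

theorem DomVec.antitone {n : ℕ} {μ : Fin n → ℤ} (h : DomVec μ) : Antitone μ :=
  fun i j => h i j

section Spectrum

variable {n : ℕ} {q t : ℂ}

theorem dPoly_eq_of_specVec_eq_comp {lam mu : Fin n → ℤ} (σ : Equiv.Perm (Fin n))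
    (h : specVec q t mu = specVec q t lam ∘ σ) : dPoly q t mu = dPoly q t lam := by
  simp only [dPoly, h, Function.comp_apply]
  exact Equiv.prod_comp σ fun i => 1 - Polynomial.C (specVec q t lam i) * Polynomial.X

theorem specVec_ne_zero (hq0 : q ≠ 0) (ht : t ≠ 0) (lam : Fin n → ℤ) (j : Fin n) :
    specVec q t lam j ≠ 0 :=
  mul_ne_zero (pow_ne_zero _ ht) (zpow_ne_zero _ hq0)

theorem map_specVec_eq_of_dPoly_eq (hq0 : q ≠ 0) (ht : t ≠ 0) {lam mu : Fin n → ℤ}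
    (h : dPoly q t lam = dPoly q t mu) :
    Finset.univ.val.map (specVec q t lam) = Finset.univ.val.map (specVec q t mu) :=
  map_univ_eq_of_prod_one_sub_C_mul_X_eq (specVec_ne_zero hq0 ht lam)
    (specVec_ne_zero hq0 ht mu) h

theorem specVec_pow_eq_zpow (hq0 : q ≠ 0) {k : ℕ} {m : ℤ} (htq : t ^ k = q ^ m)
    (lam : Fin n → ℤ) (j : Fin n) :
    specVec q t lam j ^ k = q ^ (m * (n - 1 - (j : ℕ) : ℕ) + k * lam j) := by
  rw [specVec, mul_pow, ← pow_mul, mul_comm _ k, pow_mul, htq, ← zpow_natCast (q ^ m),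
    ← zpow_natCast (q ^ lam j), ← zpow_mul, ← zpow_mul, ← zpow_add₀ hq0, mul_comm (lam j)]

theorem eq_of_map_specVec_eq_of_pow_eq_zpow (hq0 : q ≠ 0) (hq1 : ‖q‖ ≠ 1) {k : ℕ}
    (hk : k ≠ 0) {m : ℤ} (hm : 0 ≤ m) (htq : t ^ k = q ^ m) {lam mu : Fin n → ℤ}
    (hlam : Antitone lam) (hmu : Antitone mu)
    (h : Finset.univ.val.map (specVec q t lam) = Finset.univ.val.map (specVec q t mu)) :
    lam = mu := by
  set e : (Fin n → ℤ) → Fin n → ℤ := fun ν j => m * (n - 1 - (j : ℕ) : ℕ) + k * ν j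
  have he : ∀ ν, (fun a : ℤ => q ^ a) ∘ e ν = (· ^ k) ∘ specVec q t ν := fun ν =>
    funext fun j => (specVec_pow_eq_zpow hq0 htq ν j).symm
  have he_anti : ∀ ν : Fin n → ℤ, Antitone ν → Antitone (e ν) := fun ν hν i j hij =>
    add_le_add (mul_le_mul_of_nonneg_left (by exact_mod_cast Nat.sub_le_sub_left hij _) hm)
      (mul_le_mul_of_nonneg_left (hν hij) k.cast_nonneg)
  have hmap : Finset.univ.val.map (e lam) = Finset.univ.val.map (e mu) := by
    apply Multiset.map_injective (zpow_injective_of_norm_ne_one hq0 hq1)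
    rw [Multiset.map_map, Multiset.map_map, he, he, ← Multiset.map_map, h, Multiset.map_map]
  have heq := (he_anti lam hlam).eq_of_map_univ_eq (he_anti mu hmu) hmap
  funext j
  exact mul_left_cancel₀ (Int.natCast_ne_zero.mpr hk) (add_left_cancel (congrFun heq j))

theorem injective_pow_sub_mul_zpow (hq0 : q ≠ 0) (hq1 : ‖q‖ ≠ 1) (ht : t ≠ 0)
    (htq : ∀ k ∈ Finset.Icc 1 (n - 1), ∀ m : ℤ, t ^ k ≠ q ^ m) :
    Function.Injective fun p : Fin n × ℤ => t ^ (n - 1 - (p.1 : ℕ)) * q ^ p.2 := by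
  suffices key : ∀ i j : Fin n, ∀ a b : ℤ, i ≤ j →
      t ^ (n - 1 - (i : ℕ)) * q ^ a = t ^ (n - 1 - (j : ℕ)) * q ^ b → i = j ∧ a = b by
    rintro ⟨i, a⟩ ⟨j, b⟩ h
    rcases le_total i j with hij | hji
    · obtain ⟨rfl, rfl⟩ := key i j a b hij h
      rfl
    · obtain ⟨rfl, rfl⟩ := key j i b a hji h.symm
      rfl
  intro i j a b hij h
  rw [pow_sub_mul_eq_pow_sub_mul_iff ht hij (by omega)] at h
  obtain hij | hij := hij.eq_or_lt
  · subst hij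
    rw [Nat.sub_self, pow_zero, one_mul] at h
    exact ⟨rfl, zpow_injective_of_norm_ne_one hq0 hq1 h⟩
  · refine absurd ?_ (htq (j - i : ℕ) (Finset.mem_Icc.mpr ⟨by omega, by omega⟩) (b - a))
    rw [zpow_sub₀ hq0, eq_div_iff (zpow_ne_zero _ hq0), h]

theorem eq_of_map_specVec_eq_of_forall_pow_ne_zpow (hq0 : q ≠ 0) (hq1 : ‖q‖ ≠ 1) (ht : t ≠ 0)
    (htq : ∀ k ∈ Finset.Icc 1 (n - 1), ∀ m : ℤ, t ^ k ≠ q ^ m) {lam mu : Fin n → ℤ}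
    (h : Finset.univ.val.map (specVec q t lam) = Finset.univ.val.map (specVec q t mu)) :
    lam = mu := by
  apply eq_of_map_univ_graph_eq
  apply Multiset.map_injective (injective_pow_sub_mul_zpow hq0 hq1 ht htq)
  rw [Multiset.map_map, Multiset.map_map]
  exact h

theorem exists_domVec_ne_dPoly_eq (hq0 : q ≠ 0) (ht : t ≠ 0) {k : ℕ}
    (hk : k ∈ Finset.Icc 1 (n - 1)) {l : ℤ} (hl : l < 0) (htq : t ^ k = q ^ l) :
    ∃ lam mu : Fin n → ℤ, DomVec lam ∧ DomVec mu ∧ lam ≠ mu ∧ dPoly q t lam = dPoly q t mu := by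
  obtain ⟨hk1, hkn⟩ := Finset.mem_Icc.mp hk
  let i₀ : Fin n := ⟨0, by omega⟩
  let iₖ : Fin n := ⟨k, by omega⟩
  let lam : Fin n → ℤ := fun i => if k < (i : ℕ) then l else 0
  let mu : Fin n → ℤ := fun i => if (i : ℕ) = 0 then -l else if k ≤ (i : ℕ) then l else 0
  have h₀ : specVec q t mu i₀ = specVec q t lam iₖ := by
    simp only [specVec, mu, lam, i₀, iₖ, lt_irrefl, if_true, if_false]
    rw [pow_sub_mul_eq_pow_sub_mul_iff ht (Nat.zero_le k) hkn, Nat.sub_zero, htq,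
      ← zpow_add₀ hq0, add_neg_cancel]
  have hₖ : specVec q t mu iₖ = specVec q t lam i₀ := by
    simp only [specVec, mu, lam, i₀, iₖ, le_refl, if_true, if_false, Nat.not_lt_zero]
    rw [if_neg (by omega), eq_comm, pow_sub_mul_eq_pow_sub_mul_iff ht (Nat.zero_le k) hkn,
      Nat.sub_zero, zpow_zero, mul_one, htq]
  have hrest : ∀ i, i ≠ i₀ → i ≠ iₖ → mu i = lam i := by
    intro i hi₀ hiₖ
    simp only [ne_eq, Fin.ext_iff, i₀, iₖ] at hi₀ hiₖ
    simp only [mu, lam]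
    split_ifs <;> omega
  have hspec : specVec q t mu = specVec q t lam ∘ Equiv.swap i₀ iₖ := by
    funext i
    rw [Function.comp_apply, Equiv.swap_apply_def]
    split_ifs with hi₀ hiₖ
    · exact hi₀ ▸ h₀
    · exact hiₖ ▸ hₖ
    · simp only [specVec, hrest i hi₀ hiₖ]
  refine ⟨lam, mu, fun i j hij => ?_, fun i j hij => ?_, fun h => ?_,
    (dPoly_eq_of_specVec_eq_comp _ hspec).symm⟩
  · simp only [lam, Fin.le_def] at hij ⊢
    split_ifs <;> omega
  · simp only [mu, Fin.le_def] at hij ⊢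
    split_ifs <;> omega
  · have := congrFun h i₀
    simp only [lam, mu, i₀] at this
    split_ifs at this <;> omega

end Spectrum

theorem statement10_general (n : ℕ) (q t : ℂ) (hq0 : q ≠ 0)
    (hq1 : ‖q‖ < 1) (ht : t ≠ 0) :
    (∀ lam mu : Fin n → ℤ, DomVec lam → DomVec mu → lam ≠ mu →
        dPoly q t lam ≠ dPoly q t mu) ↔
      (∀ k ∈ Finset.Icc 1 (n - 1), ∀ l : ℤ, l < 0 → t ^ k ≠ q ^ l) := by
  constructor
  · intro hsep k hk l hl htq
    obtain ⟨lam, mu, hlam, hmu, hne, hd⟩ := exists_domVec_ne_dPoly_eq hq0 ht hk hl htq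
    exact hsep lam mu hlam hmu hne hd
  · intro hneg lam mu hlam hmu hne hd
    have hmap := map_specVec_eq_of_dPoly_eq hq0 ht hd
    by_cases hrel : ∃ k ∈ Finset.Icc 1 (n - 1), ∃ m : ℤ, t ^ k = q ^ m
    · obtain ⟨k, hk, m, htq⟩ := hrel
      have hk0 : k ≠ 0 := Nat.one_le_iff_ne_zero.mp (Finset.mem_Icc.mp hk).1
      have hm : 0 ≤ m := not_lt.mp fun hm => hneg k hk m hm htq
      exact hne (eq_of_map_specVec_eq_of_pow_eq_zpow hq0 hq1.ne hk0 hm htq hlam.antitone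
        hmu.antitone hmap)
    · exact hne (eq_of_map_specVec_eq_of_forall_pow_ne_zpow hq0 hq1.ne ht
        (fun k hk m htq => hrel ⟨k, hk, m, htq⟩) hmap)

/-- Lemma 4.1 (2): the polynomials `d_λ(u)` separate the set of
dominant vectors if and only if `t^k ∉ q^{ℤ_{<0}}` for `k = 1,…,n-1`. -/
theorem statement10 (n : ℕ) (hn : 2 ≤ n) (q t : ℂ) (hq0 : q ≠ 0)
    (hq1 : ‖q‖ < 1) (ht : t ≠ 0) :
    (∀ lam mu : Fin n → ℤ, DomVec lam → DomVec mu → lam ≠ mu →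
        dPoly q t lam ≠ dPoly q t mu) ↔
      (∀ k ∈ Finset.Icc 1 (n - 1), ∀ l : ℤ, l < 0 → t ^ k ≠ q ^ l) :=
  statement10_general n q t hq0 hq1 ht
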